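/- There exists a universal constant C > 0 such that for every integer N ≥ 2, all pairwise distinct points X_1, …, X_N ∈ ℝ³, and all indices 1 ≤ j, k ≤ N one has Σ_{i=1}^N 1/(d_{ij}³ d_{ik}³) ≤ C S_3 / d_{jk}³. -/
import Mathlib


open scoped BigOperators

/-- The minimal distance between pairwise distinct points `X 1, …, X N`. -/
noncomputable def dmin {N : ℕ} (X : Fin N → EuclideanSpace ℝ (Fin 3)) : ℝ :=
  sInf {r : ℝ | ∃ i j : Fin N, i ≠ j ∧ r = dist (X i) (X j)}

/-- The distance `d_{ij} = |X_i - X_j|` for `i ≠ j`, with the convention `d_{ii} = d_min`. -/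
noncomputable def dd {N : ℕ} (X : Fin N → EuclideanSpace ℝ (Fin 3)) (i j : Fin N) : ℝ :=
  if i = j then dmin X else dist (X i) (X j)

/-- `S_β = max_i ∑_j d_{ij}^{-β}`. -/
noncomputable def Ssum {N : ℕ} (X : Fin N → EuclideanSpace ℝ (Fin 3)) (β : ℝ) : ℝ :=
  ⨆ i : Fin N, ∑ j : Fin N, (dd X i j) ^ (-β)

section Aux

variable {N : ℕ} (X : Fin N → EuclideanSpace ℝ (Fin 3))

lemma distSet_finite :
    {r : ℝ | ∃ i j : Fin N, i ≠ j ∧ r = dist (X i) (X j)}.Finite := by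
  apply (Set.finite_range (fun p : Fin N × Fin N => dist (X p.1) (X p.2))).subset
  rintro r ⟨i, j, _, rfl⟩
  exact ⟨(i, j), rfl⟩

lemma dmin_mem (hN : 2 ≤ N) :
    ∃ i j : Fin N, i ≠ j ∧ dmin X = dist (X i) (X j) := by
  have hne : {r : ℝ | ∃ i j : Fin N, i ≠ j ∧ r = dist (X i) (X j)}.Nonempty := by
    refine ⟨dist (X ⟨0, by omega⟩) (X ⟨1, by omega⟩), ⟨0, by omega⟩, ⟨1, by omega⟩, ?_, rfl⟩
    simp [Fin.ext_iff]
  have := hne.csInf_mem (distSet_finite X)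
  exact this

lemma dmin_pos (hN : 2 ≤ N) (hX : Function.Injective X) : 0 < dmin X := by
  obtain ⟨i, j, hij, h⟩ := dmin_mem X hN
  rw [h]
  exact dist_pos.mpr fun h' => hij (hX h')

lemma dmin_le {i j : Fin N} (hij : i ≠ j) : dmin X ≤ dist (X i) (X j) :=
  csInf_le (distSet_finite X).bddBelow ⟨i, j, hij, rfl⟩

lemma dmin_le_dd (i j : Fin N) : dmin X ≤ dd X i j := by
  unfold dd
  split
  · exact le_refl _
  next h => exact dmin_le X h

lemma dd_pos (hN : 2 ≤ N) (hX : Function.Injective X) (i j : Fin N) : 0 < dd X i j := by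
  unfold dd
  split
  · exact dmin_pos X hN hX
  next h => exact dist_pos.mpr fun h' => h (hX h')

lemma dd_symm (i j : Fin N) : dd X i j = dd X j i := by
  unfold dd
  rcases eq_or_ne i j with h | h
  · simp [h]
  · simp [h, h.symm, dist_comm]

end Aux

lemma key_ineq {a b d : ℝ} (ha : 0 < a) (hb : 0 < b) (hd : 0 < d)
    (h : d ≤ 2 * max a b) :
    1 / (a ^ 3 * b ^ 3) ≤ 8 * (1 / a ^ 3 + 1 / b ^ 3) / d ^ 3 := by
  have ha3 : (0:ℝ) < a ^ 3 := by positivity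
  have hb3 : (0:ℝ) < b ^ 3 := by positivity
  have hd3 : (0:ℝ) < d ^ 3 := by positivity
  have hmax : d ^ 3 ≤ 8 * (a ^ 3 + b ^ 3) := by
    rcases le_total a b with hab | hab
    · rw [max_eq_right hab] at h
      have hc : d ^ 3 ≤ (2 * b) ^ 3 := pow_le_pow_left₀ hd.le h 3
      nlinarith
    · rw [max_eq_left hab] at h
      have hc : d ^ 3 ≤ (2 * a) ^ 3 := pow_le_pow_left₀ hd.le h 3
      nlinarith
  have heq : 8 * (1 / a ^ 3 + 1 / b ^ 3) / d ^ 3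
      = 8 * (a ^ 3 + b ^ 3) / (d ^ 3 * (a ^ 3 * b ^ 3)) := by
    field_simp
    ring
  rw [heq, div_le_div_iff₀ (by positivity) (by positivity)]
  nlinarith [mul_pos ha3 hb3]

lemma rpow_neg_three {x : ℝ} (hx : 0 < x) : x ^ (-(3:ℝ)) = 1 / x ^ 3 := by
  have h3 : x ^ (3:ℝ) = x ^ (3:ℕ) := by
    rw [← Real.rpow_natCast]
    norm_num
  rw [Real.rpow_neg hx.le, h3, one_div]

/-- There is a universal constant `C > 0` such that for every `N ≥ 2`, all pairwise distinct
points `X_1, …, X_N ∈ ℝ³` and all indices `j, k`, one has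
`∑_i 1/(d_{ij}³ d_{ik}³) ≤ C S_3 / d_{jk}³`. -/
theorem stmt4 :
    ∃ C : ℝ, 0 < C ∧ ∀ (N : ℕ), 2 ≤ N →
      ∀ X : Fin N → EuclideanSpace ℝ (Fin 3), Function.Injective X →
        ∀ j k : Fin N,
          ∑ i : Fin N, 1 / ((dd X i j) ^ 3 * (dd X i k) ^ 3) ≤
            C * Ssum X 3 / (dd X j k) ^ 3 := by
  refine ⟨16, by norm_num, ?_⟩
  intro N hN X hX j k
  have hpos : ∀ i l : Fin N, 0 < dd X i l := dd_pos X hN hX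
  have hd : 0 < dd X j k := hpos j k
  have hd3 : (0:ℝ) < dd X j k ^ 3 := by positivity
  -- triangle inequality step
  have htri : ∀ i : Fin N, dd X j k ≤ 2 * max (dd X i j) (dd X i k) := by
    intro i
    rcases eq_or_ne j k with rfl | hjk
    · have h1 : dd X j j ≤ dd X i j := by
        have : dd X j j = dmin X := by simp [dd]
        rw [this]; exact dmin_le_dd X i j
      have h2 : dd X i j ≤ max (dd X i j) (dd X i j) := le_max_left _ _
      have h3 : 0 < max (dd X i j) (dd X i j) := lt_of_lt_of_le (hpos i j) h2
      calc dd X j j ≤ max (dd X i j) (dd X i j) := h1.trans h2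
        _ ≤ 2 * max (dd X i j) (dd X i j) := by linarith
    · rcases eq_or_ne i j with rfl | hij
      · have : dd X i k ≤ max (dd X i i) (dd X i k) := le_max_right _ _
        have h0 : 0 < dd X i k := hpos i k
        linarith
      · rcases eq_or_ne i k with rfl | hik
        · have heq : dd X j i = dd X i j := dd_symm X j i
          have : dd X i j ≤ max (dd X i j) (dd X i i) := le_max_left _ _
          have h0 : 0 < dd X i j := hpos i j
          linarith [heq ▸ this]
        · have e1 : dd X j k = dist (X j) (X k) := by simp [dd, hjk]
          have e2 : dd X i j = dist (X i) (X j) := by simp [dd, hij]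
          have e3 : dd X i k = dist (X i) (X k) := by simp [dd, hik]
          have htriangle : dist (X j) (X k) ≤ dist (X i) (X j) + dist (X i) (X k) := by
            rw [dist_comm (X i) (X j)]
            exact dist_triangle _ _ _
          have hm1 : dd X i j ≤ max (dd X i j) (dd X i k) := le_max_left _ _
          have hm2 : dd X i k ≤ max (dd X i j) (dd X i k) := le_max_right _ _
          rw [e1, e2, e3] at *
          linarith
  -- pointwise bound
  have hpt : ∀ i : Fin N,
      1 / ((dd X i j) ^ 3 * (dd X i k) ^ 3) ≤
        8 * (1 / (dd X i j) ^ 3 + 1 / (dd X i k) ^ 3) / (dd X j k) ^ 3 :=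
    fun i => key_ineq (hpos i j) (hpos i k) hd (htri i)
  -- sums bounded by Ssum
  have hSsum : ∀ l : Fin N, ∑ i : Fin N, 1 / (dd X i l) ^ 3 ≤ Ssum X 3 := by
    intro l
    have heq : ∑ i : Fin N, 1 / (dd X i l) ^ 3
        = ∑ i : Fin N, (dd X l i) ^ (-(3:ℝ)) := by
      refine Finset.sum_congr rfl fun i _ => ?_
      rw [rpow_neg_three (hpos l i), dd_symm X i l]
    rw [heq]
    unfold Ssum
    exact le_ciSup (f := fun i : Fin N => ∑ m : Fin N, (dd X i m) ^ (-(3:ℝ)))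
      (Set.finite_range _).bddAbove l
  have hS0 : 0 ≤ Ssum X 3 := by
    refine le_trans ?_ (hSsum j)
    exact Finset.sum_nonneg fun i _ => one_div_nonneg.mpr (pow_nonneg (hpos i j).le 3)
  calc ∑ i : Fin N, 1 / ((dd X i j) ^ 3 * (dd X i k) ^ 3)
      ≤ ∑ i : Fin N, 8 * (1 / (dd X i j) ^ 3 + 1 / (dd X i k) ^ 3) / (dd X j k) ^ 3 :=
        Finset.sum_le_sum fun i _ => hpt i
    _ = 8 * ((∑ i : Fin N, 1 / (dd X i j) ^ 3) + ∑ i : Fin N, 1 / (dd X i k) ^ 3)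
          / (dd X j k) ^ 3 := by
        rw [← Finset.sum_div, ← Finset.mul_sum, Finset.sum_add_distrib]
    _ ≤ 8 * (Ssum X 3 + Ssum X 3) / (dd X j k) ^ 3 := by
        gcongr
        · exact hSsum j
        · exact hSsum k
    _ = 16 * Ssum X 3 / (dd X j k) ^ 3 := by ring
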